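/- arXiv:2112.03361 — 2 statements merged into one kernel-verified Lean document; each statement's English description precedes it below -/
import Mathlib

section
/- ζ(3,2) = ∑_{n>m≥1} 1/(n³m²) = (π²ζ(3) − 11ζ(5))/2. -/
open Real

namespace Stmt16

noncomputable section

set_option maxHeartbeats 1000000

/-- Harmonic number -/
def Har (n : ℕ) : ℝ := ∑ j ∈ Finset.range n, 1 / ((j : ℝ) + 1)

lemma Har_succ (n : ℕ) : Har (n + 1) = Har n + 1 / ((n : ℝ) + 1) :=
  Finset.sum_range_succ _ n

lemma Har_nonneg (n : ℕ) : 0 ≤ Har n :=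
  Finset.sum_nonneg fun j _ => by positivity

lemma Har_le (n : ℕ) : Har n ≤ n := by
  induction n with
  | zero => simp [Har]
  | succ n ih =>
    rw [Har_succ]
    push_cast
    have hn : (0:ℝ) ≤ (n:ℝ) := Nat.cast_nonneg n
    have : 1 / ((n : ℝ) + 1) ≤ 1 := by
      rw [div_le_one (by positivity)]; linarith
    linarith

lemma summable_zpow {a : ℕ} (ha : 2 ≤ a) :
    Summable (fun n : ℕ => 1 / ((n : ℝ) + 1) ^ a) := by
  have h0 : Summable (fun n : ℕ => 1 / (n : ℝ) ^ a) :=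
    summable_one_div_nat_pow.2 (by omega)
  exact ((summable_nat_add_iff 1).2 h0).congr fun n => by push_cast; ring

lemma summable_w : Summable (fun p : ℕ × ℕ =>
    1 / ((p.1 : ℝ) + 1) ^ 2 * (1 / ((p.2 : ℝ) + 1) ^ 2)) := by
  have h2 := summable_zpow (a := 2) le_rfl
  exact h2.mul_of_nonneg h2 (fun n => by positivity) fun n => by positivity

lemma summable_of_le_w {f : ℕ × ℕ → ℝ} (h0 : ∀ p, 0 ≤ f p)
    (h : ∀ p : ℕ × ℕ, f p ≤ 1 / ((p.1 : ℝ) + 1) ^ 2 * (1 / ((p.2 : ℝ) + 1) ^ 2)) :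
    Summable f :=
  Summable.of_nonneg_of_le h0 h summable_w

lemma div_le_div_bound {x y d : ℝ} (hx : 0 < x) (hy : 0 < y) (hd : x ^ 2 * y ^ 2 ≤ d) :
    1 / d ≤ 1 / x ^ 2 * (1 / y ^ 2) := by
  rw [one_div_mul_one_div]
  exact one_div_le_one_div_of_le (by positivity) hd

lemma ineq41 {x y : ℝ} (hx : 1 ≤ x) (hy : 1 ≤ y) : x ^ 2 * y ^ 2 ≤ (x + y) ^ 4 * x := by
  have hx0 : (0:ℝ) ≤ x := by linarith
  have hy0 : (0:ℝ) ≤ y := by linarith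
  calc x ^ 2 * y ^ 2 ≤ (x + y) ^ 2 * (x + y) ^ 2 := by
        apply mul_le_mul (pow_le_pow_left₀ hx0 (by linarith) 2)
          (pow_le_pow_left₀ hy0 (by linarith) 2) (by positivity) (by positivity)
    _ = (x + y) ^ 4 * 1 := by ring
    _ ≤ (x + y) ^ 4 * x := by
        apply mul_le_mul_of_nonneg_left hx (by positivity)

lemma ineq32 {x y : ℝ} (hx : 1 ≤ x) (hy : 1 ≤ y) : x ^ 2 * y ^ 2 ≤ (x + y) ^ 3 * x ^ 2 := by
  have hx0 : (0:ℝ) ≤ x := by linarith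
  have hy0 : (0:ℝ) ≤ y := by linarith
  have h1 : y ^ 2 ≤ (x + y) ^ 2 := pow_le_pow_left₀ hy0 (by linarith) 2
  have h2 : (x + y) ^ 2 ≤ (x + y) ^ 3 := pow_le_pow_right₀ (by linarith) (by norm_num)
  calc x ^ 2 * y ^ 2 ≤ x ^ 2 * (x + y) ^ 3 := by
        apply mul_le_mul_of_nonneg_left (le_trans h1 h2) (by positivity)
    _ = (x + y) ^ 3 * x ^ 2 := by ring

lemma ineq23 {x y : ℝ} (hx : 1 ≤ x) (hy : 1 ≤ y) : x ^ 2 * y ^ 2 ≤ (x + y) ^ 2 * x ^ 3 := by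
  have hx0 : (0:ℝ) ≤ x := by linarith
  have hy0 : (0:ℝ) ≤ y := by linarith
  have h1 : y ^ 2 ≤ (x + y) ^ 2 := pow_le_pow_left₀ hy0 (by linarith) 2
  have h2 : x ^ 2 ≤ x ^ 3 := pow_le_pow_right₀ hx (by norm_num)
  calc x ^ 2 * y ^ 2 ≤ x ^ 3 * (x + y) ^ 2 :=
        mul_le_mul h2 h1 (by positivity) (by positivity)
    _ = (x + y) ^ 2 * x ^ 3 := by ring

lemma ineqX {x y : ℝ} (hx : 1 ≤ x) (hy : 1 ≤ y) : x ^ 2 * y ^ 2 ≤ (x + y) * x ^ 3 * y := by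
  have hx0 : (0:ℝ) ≤ x := by linarith
  have hy0 : (0:ℝ) ≤ y := by linarith
  have h1 : y * y ≤ (x + y) * y := by
    apply mul_le_mul_of_nonneg_right (by linarith) hy0
  have h2 : x ^ 2 ≤ x ^ 3 := pow_le_pow_right₀ hx (by norm_num)
  calc x ^ 2 * y ^ 2 = x ^ 2 * (y * y) := by ring
    _ ≤ x ^ 3 * ((x + y) * y) := mul_le_mul h2 h1 (by positivity) (by positivity)
    _ = (x + y) * x ^ 3 * y := by ring

lemma ineqh {x y : ℝ} (hx : 1 ≤ x) (hy : 1 ≤ y) : x ^ 2 * y ^ 2 ≤ x ^ 2 * y ^ 3 := by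
  apply mul_le_mul_of_nonneg_left (pow_le_pow_right₀ hy (by norm_num)) (by positivity)


def F (a b : ℕ) (p : ℕ × ℕ) : ℝ :=
  1 / (((p.1 : ℝ) + (p.2 : ℝ) + 2) ^ a * ((p.1 : ℝ) + 1) ^ b)

def G (a b : ℕ) (p : ℕ × ℕ) : ℝ :=
  1 / (((p.1 : ℝ) + (p.2 : ℝ) + 2) ^ a * ((p.2 : ℝ) + 1) ^ b)

def XF (p : ℕ × ℕ) : ℝ :=
  1 / (((p.1 : ℝ) + (p.2 : ℝ) + 2) * ((p.1 : ℝ) + 1) ^ 3 * ((p.2 : ℝ) + 1))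

lemma one_le_cast_add_one (n : ℕ) : (1 : ℝ) ≤ (n : ℝ) + 1 :=
  le_add_of_nonneg_left (Nat.cast_nonneg n)

lemma F_nonneg (a b : ℕ) (p : ℕ × ℕ) : 0 ≤ F a b p := by
  simp only [F]; positivity

lemma G_nonneg (a b : ℕ) (p : ℕ × ℕ) : 0 ≤ G a b p := by
  simp only [G]; positivity

lemma XF_nonneg (p : ℕ × ℕ) : 0 ≤ XF p := by
  simp only [XF]; positivity

lemma summable_F41 : Summable (F 4 1) := by
  apply summable_of_le_w (F_nonneg 4 1)
  intro p
  have hx := one_le_cast_add_one p.1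
  have hy := one_le_cast_add_one p.2
  apply div_le_div_bound (by positivity) (by positivity)
  have := ineq41 hx hy
  calc ((p.1:ℝ)+1)^2 * ((p.2:ℝ)+1)^2 ≤ (((p.1:ℝ)+1) + ((p.2:ℝ)+1))^4 * ((p.1:ℝ)+1) := this
    _ = ((p.1:ℝ) + (p.2:ℝ) + 2)^4 * ((p.1:ℝ)+1)^1 := by ring

lemma summable_F32 : Summable (F 3 2) := by
  apply summable_of_le_w (F_nonneg 3 2)
  intro p
  have hx := one_le_cast_add_one p.1
  have hy := one_le_cast_add_one p.2
  apply div_le_div_bound (by positivity) (by positivity)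
  have := ineq32 hx hy
  calc ((p.1:ℝ)+1)^2 * ((p.2:ℝ)+1)^2 ≤ (((p.1:ℝ)+1) + ((p.2:ℝ)+1))^3 * ((p.1:ℝ)+1)^2 := this
    _ = ((p.1:ℝ) + (p.2:ℝ) + 2)^3 * ((p.1:ℝ)+1)^2 := by ring

lemma summable_F23 : Summable (F 2 3) := by
  apply summable_of_le_w (F_nonneg 2 3)
  intro p
  have hx := one_le_cast_add_one p.1
  have hy := one_le_cast_add_one p.2
  apply div_le_div_bound (by positivity) (by positivity)
  have := ineq23 hx hy
  calc ((p.1:ℝ)+1)^2 * ((p.2:ℝ)+1)^2 ≤ (((p.1:ℝ)+1) + ((p.2:ℝ)+1))^2 * ((p.1:ℝ)+1)^3 := this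
    _ = ((p.1:ℝ) + (p.2:ℝ) + 2)^2 * ((p.1:ℝ)+1)^3 := by ring

lemma summable_XF : Summable XF := by
  apply summable_of_le_w XF_nonneg
  intro p
  have hx := one_le_cast_add_one p.1
  have hy := one_le_cast_add_one p.2
  apply div_le_div_bound (by positivity) (by positivity)
  have := ineqX hx hy
  calc ((p.1:ℝ)+1)^2 * ((p.2:ℝ)+1)^2 ≤ (((p.1:ℝ)+1) + ((p.2:ℝ)+1)) * ((p.1:ℝ)+1)^3 * ((p.2:ℝ)+1) := this
    _ = ((p.1:ℝ) + (p.2:ℝ) + 2) * ((p.1:ℝ)+1)^3 * ((p.2:ℝ)+1) := by ring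

lemma G_eq_comp (a b : ℕ) :
    G a b = (F a b) ∘ (Equiv.prodComm ℕ ℕ) := by
  funext p
  simp only [G, F, Function.comp_apply, Equiv.prodComm_apply, Prod.fst_swap, Prod.snd_swap]
  ring_nf

lemma summable_G {a b : ℕ} (h : Summable (F a b)) : Summable (G a b) := by
  rw [G_eq_comp]
  exact ((Equiv.prodComm ℕ ℕ).summable_iff).2 h

lemma tsum_G (a b : ℕ) : ∑' p, G a b p = ∑' p, F a b p := by
  rw [G_eq_comp]
  exact (Equiv.prodComm ℕ ℕ).tsum_eq (F a b)

def h (p : ℕ × ℕ) : ℝ := 1 / (((p.1 : ℝ) + 1) ^ 2 * ((p.2 : ℝ) + 1) ^ 3)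

lemma h_nonneg (p : ℕ × ℕ) : 0 ≤ h p := by simp only [h]; positivity

lemma summable_h : Summable h := by
  apply summable_of_le_w h_nonneg
  intro p
  have hx := one_le_cast_add_one p.1
  have hy := one_le_cast_add_one p.2
  exact div_le_div_bound (by positivity) (by positivity) (ineqh hx hy)

def Z (a : ℕ) : ℝ := ∑' n : ℕ, 1 / ((n : ℝ) + 1) ^ a

lemma tsum_h : ∑' p, h p = Z 2 * Z 3 := by
  have hs : Summable h := summable_h
  have : ∀ p : ℕ × ℕ, h p = (1 / ((p.1:ℝ)+1)^2) * (1 / ((p.2:ℝ)+1)^3) := by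
    intro p; simp only [h]; rw [one_div_mul_one_div]
  calc ∑' p, h p = ∑' (m : ℕ) (k : ℕ), h (m, k) := Summable.tsum_prod' hs (fun m => hs.prod_factor m)
    _ = ∑' (m : ℕ), (1 / ((m:ℝ)+1)^2) * ∑' (k : ℕ), (1 / ((k:ℝ)+1)^3) := by
        apply tsum_congr; intro m
        rw [← tsum_mul_left]
        exact tsum_congr fun k => this (m, k)
    _ = Z 2 * Z 3 := by rw [tsum_mul_right]; rfl


section Split
open Classical in
lemma piece_lt {f : ℕ × ℕ → ℝ} :
    ∑' p : ℕ × ℕ, (if p.1 < p.2 then f p else 0)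
      = ∑' c : ℕ × ℕ, f (c.1, c.1 + c.2 + 1) := by
  classical
  have hg : Function.Injective (fun c : ℕ × ℕ => ((c.1, c.1 + c.2 + 1) : ℕ × ℕ)) := by
    intro a b hab
    simp only [Prod.mk.injEq] at hab
    exact Prod.ext hab.1 (by omega)
  have hsupp : ∀ p ∉ Set.range (fun c : ℕ × ℕ => ((c.1, c.1 + c.2 + 1) : ℕ × ℕ)),
      (if p.1 < p.2 then f p else 0) = 0 := by
    intro p hp
    by_contra hne
    have hlt : p.1 < p.2 := by
      by_contra hge
      exact hne (if_neg hge)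
    exact hp ⟨(p.1, p.2 - p.1 - 1), Prod.ext rfl (by simp; omega)⟩
  rw [← hg.tsum_eq (Function.support_subset_iff'.mpr hsupp)]
  exact tsum_congr fun c => if_pos (by omega)

open Classical in
lemma piece_gt {f : ℕ × ℕ → ℝ} :
    ∑' p : ℕ × ℕ, (if p.2 < p.1 then f p else 0)
      = ∑' c : ℕ × ℕ, f (c.1 + c.2 + 1, c.1) := by
  classical
  have hg : Function.Injective (fun c : ℕ × ℕ => ((c.1 + c.2 + 1, c.1) : ℕ × ℕ)) := by
    intro a b hab
    simp only [Prod.mk.injEq] at hab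
    exact Prod.ext hab.2 (by omega)
  have hsupp : ∀ p ∉ Set.range (fun c : ℕ × ℕ => ((c.1 + c.2 + 1, c.1) : ℕ × ℕ)),
      (if p.2 < p.1 then f p else 0) = 0 := by
    intro p hp
    by_contra hne
    have hlt : p.2 < p.1 := by
      by_contra hge
      exact hne (if_neg hge)
    exact hp ⟨(p.2, p.1 - p.2 - 1), Prod.ext (by simp; omega) rfl⟩
  rw [← hg.tsum_eq (Function.support_subset_iff'.mpr hsupp)]
  exact tsum_congr fun c => if_pos (by omega)

open Classical in
lemma piece_diag {f : ℕ × ℕ → ℝ} :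
    ∑' p : ℕ × ℕ, (if p.1 = p.2 then f p else 0) = ∑' n : ℕ, f (n, n) := by
  classical
  have hg : Function.Injective (fun n : ℕ => ((n, n) : ℕ × ℕ)) := by
    intro a b hab
    simp only [Prod.mk.injEq] at hab
    exact hab.1
  have hsupp : ∀ p ∉ Set.range (fun n : ℕ => ((n, n) : ℕ × ℕ)),
      (if p.1 = p.2 then f p else 0) = 0 := by
    intro p hp
    by_contra hne
    have heq : p.1 = p.2 := by
      by_contra hge
      exact hne (if_neg hge)
    exact hp ⟨p.1, Prod.ext rfl heq⟩
  rw [← hg.tsum_eq (Function.support_subset_iff'.mpr hsupp)]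
  exact tsum_congr fun n => if_pos rfl

open Classical in
lemma tsum_split {f : ℕ × ℕ → ℝ} (hf : Summable f) (h0 : ∀ p, 0 ≤ f p) :
    ∑' p, f p = ∑' c : ℕ × ℕ, f (c.1, c.1 + c.2 + 1)
      + (∑' c : ℕ × ℕ, f (c.1 + c.2 + 1, c.1) + ∑' n : ℕ, f (n, n)) := by
  classical
  have h1 : Summable (fun p : ℕ × ℕ => if p.1 < p.2 then f p else 0) := by
    apply Summable.of_nonneg_of_le _ _ hf
    · intro p; split
      · exact h0 p
      · exact le_rfl
    · intro p; split
      · exact le_rfl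
      · exact h0 p
  have h2 : Summable (fun p : ℕ × ℕ => if p.2 < p.1 then f p else 0) := by
    apply Summable.of_nonneg_of_le _ _ hf
    · intro p; split
      · exact h0 p
      · exact le_rfl
    · intro p; split
      · exact le_rfl
      · exact h0 p
  have h3 : Summable (fun p : ℕ × ℕ => if p.1 = p.2 then f p else 0) := by
    apply Summable.of_nonneg_of_le _ _ hf
    · intro p; split
      · exact h0 p
      · exact le_rfl
    · intro p; split
      · exact le_rfl
      · exact h0 p
  have hpt : ∀ p : ℕ × ℕ, f p = (if p.1 < p.2 then f p else 0)
      + ((if p.2 < p.1 then f p else 0) + (if p.1 = p.2 then f p else 0)) := by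
    intro p
    rcases lt_trichotomy p.1 p.2 with h | h | h
    · rw [if_pos h, if_neg (by omega), if_neg (by omega)]; ring
    · rw [if_neg (by omega), if_neg (by omega), if_pos h]; ring
    · rw [if_neg (by omega), if_pos h, if_neg (by omega)]; ring
  rw [tsum_congr hpt, Summable.tsum_add h1 (h2.add h3), Summable.tsum_add h2 h3, piece_lt, piece_gt, piece_diag]
end Split


lemma rel1 : Z 2 * Z 3 = ∑' p, F 3 2 p + (∑' p, F 2 3 p + Z 5) := by
  rw [← tsum_h, tsum_split summable_h h_nonneg]
  congr 1
  · apply tsum_congr; intro c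
    simp only [h, F]
    push_cast
    ring_nf
  congr 1
  · apply tsum_congr; intro c
    simp only [h, F]
    push_cast
    ring_nf
  · apply tsum_congr; intro n
    simp only [h, Z]
    ring_nf

lemma pf2 (p : ℕ × ℕ) : h p = (3 * F 4 1 p + F 3 2 p)
    + (3 * G 4 1 p + (2 * G 3 2 p + G 2 3 p)) := by
  simp only [h, F, G]
  have hx : ((p.1:ℝ)+1) ≠ 0 := by positivity
  have hy : ((p.2:ℝ)+1) ≠ 0 := by positivity
  have hn : ((p.1:ℝ)+(p.2:ℝ)+2) ≠ 0 := by positivity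
  field_simp
  ring

lemma rel2 : Z 2 * Z 3 = 6 * (∑' p, F 4 1 p) + 3 * (∑' p, F 3 2 p) + ∑' p, F 2 3 p := by
  have s41 := summable_F41
  have s32 := summable_F32
  have s23 := summable_F23
  have g41 := summable_G s41
  have g32 := summable_G s32
  have g23 := summable_G s23
  rw [← tsum_h, tsum_congr pf2,
    Summable.tsum_add ((s41.mul_left 3).add s32) ((g41.mul_left 3).add ((g32.mul_left 2).add g23)),
    Summable.tsum_add (s41.mul_left 3) s32,
    Summable.tsum_add (g41.mul_left 3) ((g32.mul_left 2).add g23),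
    Summable.tsum_add (g32.mul_left 2) g23,
    tsum_mul_left, tsum_mul_left, tsum_mul_left, tsum_G, tsum_G, tsum_G]
  ring

lemma pf3 (p : ℕ × ℕ) : XF p = (F 4 1 p + F 3 2 p) + (F 2 3 p + G 4 1 p) := by
  simp only [XF, F, G]
  have hx : ((p.1:ℝ)+1) ≠ 0 := by positivity
  have hy : ((p.2:ℝ)+1) ≠ 0 := by positivity
  have hn : ((p.1:ℝ)+(p.2:ℝ)+2) ≠ 0 := by positivity
  field_simp
  ring

lemma rel3 : ∑' p, XF p = 2 * (∑' p, F 4 1 p) + ∑' p, F 3 2 p + ∑' p, F 2 3 p := by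
  have s41 := summable_F41
  have s32 := summable_F32
  have s23 := summable_F23
  have g41 := summable_G s41
  rw [tsum_congr pf3, Summable.tsum_add (s41.add s32) (s23.add g41), Summable.tsum_add s41 s32,
    Summable.tsum_add s23 g41, tsum_G]
  ring


lemma telescope (c : ℕ) :
    ∑' k : ℕ, (1 / ((k:ℝ) + 1) - 1 / ((k:ℝ) + (c:ℝ) + 1)) = Har c := by
  have hpt : ∀ k : ℕ, 1 / ((k:ℝ) + 1) - 1 / ((k:ℝ) + (c:ℝ) + 1)
      = (c:ℝ) / (((k:ℝ) + 1) * ((k:ℝ) + (c:ℝ) + 1)) := by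
    intro k
    have h1 : ((k:ℝ) + 1) ≠ 0 := by positivity
    have h2 : ((k:ℝ) + (c:ℝ) + 1) ≠ 0 := by positivity
    field_simp
    try ring
  have hc0 : (0:ℝ) ≤ (c:ℝ) := Nat.cast_nonneg c
  have hnn : ∀ k : ℕ, 0 ≤ 1 / ((k:ℝ) + 1) - 1 / ((k:ℝ) + (c:ℝ) + 1) := by
    intro k; rw [hpt k]; positivity
  have hb : ∀ k : ℕ, 1 / ((k:ℝ) + 1) - 1 / ((k:ℝ) + (c:ℝ) + 1)
      ≤ (c:ℝ) * (1 / ((k:ℝ) + 1) ^ 2) := by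
    intro k
    rw [hpt k, div_eq_mul_one_div]
    apply mul_le_mul_of_nonneg_left _ hc0
    apply one_div_le_one_div_of_le (by positivity)
    have : ((k:ℝ) + 1) ≤ ((k:ℝ) + (c:ℝ) + 1) := by linarith
    calc ((k:ℝ)+1)^2 = ((k:ℝ)+1) * ((k:ℝ)+1) := sq ((k:ℝ)+1)
      _ ≤ ((k:ℝ)+1) * ((k:ℝ)+(c:ℝ)+1) := by
          apply mul_le_mul_of_nonneg_left this (by positivity)
  have hsum : Summable (fun k : ℕ => 1 / ((k:ℝ) + 1) - 1 / ((k:ℝ) + (c:ℝ) + 1)) :=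
    Summable.of_nonneg_of_le hnn hb ((summable_zpow le_rfl).mul_left _)
  have hps : ∀ K : ℕ, ∑ k ∈ Finset.range K, (1 / ((k:ℝ) + 1) - 1 / ((k:ℝ) + (c:ℝ) + 1))
      = Har c - ∑ j ∈ Finset.range c, 1 / (((K + j : ℕ):ℝ) + 1) := by
    intro K
    rw [Finset.sum_sub_distrib]
    have h1 : ∑ k ∈ Finset.range (K + c), (1 / ((k:ℝ) + 1))
        = (∑ k ∈ Finset.range K, 1 / ((k:ℝ) + 1))
          + ∑ j ∈ Finset.range c, 1 / (((K + j : ℕ):ℝ) + 1) :=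
      Finset.sum_range_add (fun k => 1 / ((k:ℝ) + 1)) K c
    have h2 : ∑ k ∈ Finset.range (c + K), (1 / ((k:ℝ) + 1))
        = Har c + ∑ k ∈ Finset.range K, 1 / (((c + k : ℕ):ℝ) + 1) :=
      Finset.sum_range_add (fun k => 1 / ((k:ℝ) + 1)) c K
    have h3 : ∑ k ∈ Finset.range K, (1 / ((k:ℝ) + (c:ℝ) + 1))
        = ∑ k ∈ Finset.range K, 1 / (((c + k : ℕ):ℝ) + 1) := by
      apply Finset.sum_congr rfl
      intro k _
      push_cast
      ring_nf
    rw [h3]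
    rw [Nat.add_comm c K] at h2
    linarith
  have hlim : Filter.Tendsto
      (fun K : ℕ => Har c - ∑ j ∈ Finset.range c, 1 / (((K + j : ℕ):ℝ) + 1))
      Filter.atTop (nhds (Har c - 0)) := by
    apply Filter.Tendsto.const_sub
    have h0 : Filter.Tendsto (fun K : ℕ => (0:ℝ)) Filter.atTop (nhds 0) := tendsto_const_nhds
    have : Filter.Tendsto (fun K : ℕ => ∑ j ∈ Finset.range c, 1 / (((K + j : ℕ):ℝ) + 1))
        Filter.atTop (nhds (∑ j ∈ Finset.range c, (0:ℝ))) := by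
      apply tendsto_finset_sum
      intro j _
      have ht : Filter.Tendsto (fun K : ℕ => ((K:ℝ) + ((j:ℝ) + 1))) Filter.atTop Filter.atTop :=
        Filter.tendsto_atTop_add_const_right _ _ tendsto_natCast_atTop_atTop
      have := ht.inv_tendsto_atTop
      apply this.congr
      intro K
      simp only [Pi.inv_apply]
      rw [inv_eq_one_div]
      push_cast
      ring
    simpa using this
  have ht1 := hsum.hasSum.tendsto_sum_nat
  rw [Filter.tendsto_congr hps] at ht1
  have := tendsto_nhds_unique ht1 hlim
  rw [this, sub_zero]


lemma relX : ∑' p, XF p = ∑' m : ℕ, 1 / ((m:ℝ) + 1) ^ 4 * Har (m + 1) := by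
  rw [Summable.tsum_prod' summable_XF (fun m => summable_XF.prod_factor m)]
  apply tsum_congr
  intro m
  calc ∑' k : ℕ, XF (m, k)
      = ∑' k : ℕ, 1 / ((m:ℝ) + 1) ^ 4 * (1 / ((k:ℝ) + 1) - 1 / ((k:ℝ) + ((m + 1 : ℕ):ℝ) + 1)) := by
        apply tsum_congr
        intro k
        simp only [XF]
        have h1 : ((m:ℝ) + 1) ≠ 0 := by positivity
        have h2 : ((k:ℝ) + 1) ≠ 0 := by positivity
        have h3 : ((m:ℝ) + (k:ℝ) + 2) ≠ 0 := by positivity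
        push_cast
        field_simp
        ring
    _ = 1 / ((m:ℝ) + 1) ^ 4 * ∑' k : ℕ, (1 / ((k:ℝ) + 1) - 1 / ((k:ℝ) + ((m + 1 : ℕ):ℝ) + 1)) :=
        tsum_mul_left
    _ = 1 / ((m:ℝ) + 1) ^ 4 * Har (m + 1) := by rw [telescope (m + 1)]

open Classical in
lemma C_eq : ∑' p, F 4 1 p = ∑' s : ℕ, 1 / ((s:ℝ) + 2) ^ 4 * Har (s + 1) := by
  classical
  set vC : ℕ × ℕ → ℝ := fun q => if q.2 ≤ q.1 then 1 / (((q.1:ℝ) + 2) ^ 4 * ((q.2:ℝ) + 1)) else 0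
    with hvC
  have hg : Function.Injective (fun c : ℕ × ℕ => ((c.1 + c.2, c.1) : ℕ × ℕ)) := by
    intro a b hab
    simp only [Prod.mk.injEq] at hab
    exact Prod.ext hab.2 (by omega)
  have hsupp : ∀ q ∉ Set.range (fun c : ℕ × ℕ => ((c.1 + c.2, c.1) : ℕ × ℕ)), vC q = 0 := by
    intro q hq
    by_contra hne
    have hle : q.2 ≤ q.1 := by
      by_contra hgt
      exact hne (if_neg hgt)
    exact hq ⟨(q.2, q.1 - q.2), Prod.ext (by simp; omega) rfl⟩
  have hcomp : ∀ c : ℕ × ℕ, vC ((c.1 + c.2, c.1) : ℕ × ℕ) = F 4 1 c := by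
    intro c
    simp only [hvC, F]
    rw [if_pos (by omega : c.1 ≤ c.1 + c.2)]
    push_cast
    ring_nf
  have hvsum : Summable vC := by
    have h1 : Summable (vC ∘ (fun c : ℕ × ℕ => ((c.1 + c.2, c.1) : ℕ × ℕ))) :=
      summable_F41.congr fun c => (hcomp c).symm
    exact (hg.summable_iff hsupp).1 h1
  calc ∑' p, F 4 1 p = ∑' c : ℕ × ℕ, vC ((c.1 + c.2, c.1) : ℕ × ℕ) := (tsum_congr hcomp).symm
    _ = ∑' q, vC q := hg.tsum_eq (Function.support_subset_iff'.mpr hsupp)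
    _ = ∑' (s : ℕ) (m : ℕ), vC (s, m) := Summable.tsum_prod' hvsum fun s => hvsum.prod_factor s
    _ = ∑' s : ℕ, 1 / ((s:ℝ) + 2) ^ 4 * Har (s + 1) := by
        apply tsum_congr
        intro s
        rw [tsum_eq_sum (s := Finset.range (s + 1))
          (fun m hm => by
            simp only [hvC]
            rw [if_neg]
            simp only [Finset.mem_range] at hm
            omega)]
        rw [Har, Finset.mul_sum]
        apply Finset.sum_congr rfl
        intro m hm
        simp only [Finset.mem_range] at hm
        simp only [hvC]
        rw [if_pos (by omega : m ≤ s), ← one_div_mul_one_div]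

lemma sC : Summable (fun s : ℕ => 1 / ((s:ℝ) + 2) ^ 4 * Har (s + 1)) := by
  apply Summable.of_nonneg_of_le _ _ (summable_zpow (a := 3) (by norm_num))
  · intro s
    exact mul_nonneg (by positivity) (Har_nonneg _)
  · intro s
    have h1 : Har (s + 1) ≤ ((s:ℝ) + 1) := by
      have := Har_le (s + 1)
      push_cast at this
      linarith
    have h2 : ((s:ℝ) + 2) ≠ 0 := by positivity
    calc 1 / ((s:ℝ) + 2) ^ 4 * Har (s + 1) ≤ 1 / ((s:ℝ) + 2) ^ 4 * ((s:ℝ) + 2) := by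
          apply mul_le_mul_of_nonneg_left (le_trans h1 (by linarith)) (by positivity)
      _ = 1 / ((s:ℝ) + 2) ^ 3 := by field_simp
      _ ≤ 1 / ((s:ℝ) + 1) ^ 3 := by
          apply one_div_le_one_div_of_le (by positivity)
          apply pow_le_pow_left₀ (by positivity) (by linarith)

lemma sY : Summable (fun m : ℕ => 1 / ((m:ℝ) + 1) ^ 4 * Har (m + 1)) := by
  apply Summable.of_nonneg_of_le _ _ (summable_zpow (a := 3) (by norm_num))
  · intro m
    exact mul_nonneg (by positivity) (Har_nonneg _)
  · intro m
    have h1 : Har (m + 1) ≤ ((m:ℝ) + 1) := by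
      have := Har_le (m + 1)
      push_cast at this
      linarith
    have h2 : ((m:ℝ) + 1) ≠ 0 := by positivity
    calc 1 / ((m:ℝ) + 1) ^ 4 * Har (m + 1) ≤ 1 / ((m:ℝ) + 1) ^ 4 * ((m:ℝ) + 1) := by
          apply mul_le_mul_of_nonneg_left h1 (by positivity)
      _ = 1 / ((m:ℝ) + 1) ^ 3 := by field_simp

lemma s5shift : Summable (fun s : ℕ => 1 / ((s:ℝ) + 2) ^ 5) := by
  apply Summable.of_nonneg_of_le _ _ (summable_zpow (a := 5) (by norm_num))
  · intro s; positivity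
  · intro s
    apply one_div_le_one_div_of_le (by positivity)
    apply pow_le_pow_left₀ (by positivity) (by linarith)

lemma Z5_shift : ∑' s : ℕ, 1 / ((s:ℝ) + 2) ^ 5 = Z 5 - 1 := by
  have h := Summable.tsum_eq_zero_add (summable_zpow (a := 5) (by norm_num))
  have h0 : 1 / (((0:ℕ):ℝ) + 1) ^ 5 = (1:ℝ) := by norm_num
  have hZ : Z 5 = 1 + ∑' s : ℕ, 1 / ((s:ℝ) + 2) ^ 5 := by
    rw [Z, h, h0]
    congr 1
    apply tsum_congr
    intro n
    push_cast
    ring_nf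
  linarith [hZ]

lemma Y_eq : ∑' m : ℕ, 1 / ((m:ℝ) + 1) ^ 4 * Har (m + 1) = (∑' p, F 4 1 p) + Z 5 := by
  rw [Summable.tsum_eq_zero_add sY]
  have hstep : ∀ m : ℕ, 1 / (((m + 1 : ℕ):ℝ) + 1) ^ 4 * Har (m + 1 + 1)
      = 1 / ((m:ℝ) + 2) ^ 4 * Har (m + 1) + 1 / ((m:ℝ) + 2) ^ 5 := by
    intro m
    rw [Har_succ]
    have h2 : ((m:ℝ) + 2) ≠ 0 := by positivity
    push_cast
    field_simp
    ring
  rw [tsum_congr hstep, Summable.tsum_add sC s5shift, Z5_shift, C_eq]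
  have h0 : 1 / (((0:ℕ):ℝ) + 1) ^ 4 * Har (0 + 1) = 1 := by
    simp [Har]
  rw [h0]
  ring

lemma A_eq : ∑' p, F 3 2 p = 3 * (Z 2 * Z 3) - 11 / 2 * Z 5 := by
  have r1 := rel1
  have r2 := rel2
  have r3 := rel3
  have rx : ∑' p, XF p = (∑' p, F 4 1 p) + Z 5 := relX.trans Y_eq
  linarith

lemma zeta_shift (a : ℕ) (ha : 1 < a) : ∑' n : ℕ, 1 / ((n:ℝ)) ^ a = Z a := by
  have hs : Summable (fun n : ℕ => 1 / (n:ℝ) ^ a) := summable_one_div_nat_pow.2 ha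
  rw [Summable.tsum_eq_zero_add hs]
  have h0 : (1:ℝ) / ((0:ℕ):ℝ) ^ a = 0 := by
    simp [zero_pow (by omega : a ≠ 0)]
  rw [h0, zero_add, Z]
  apply tsum_congr
  intro n
  push_cast
  ring_nf

lemma Z2_val : Z 2 = π ^ 2 / 6 := by
  rw [← zeta_shift 2 one_lt_two, hasSum_zeta_two.tsum_eq]

lemma zeta_val (k : ℕ) (hk : 1 < k) : riemannZeta (k : ℂ) = ((Z k : ℝ) : ℂ) := by
  rw [zeta_nat_eq_tsum_of_gt_one hk, ← zeta_shift k hk, Complex.ofReal_tsum]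
  apply tsum_congr
  intro n
  push_cast
  ring_nf

def eSub : ℕ × ℕ ≃ {p : ℕ × ℕ // p.2 < p.1 ∧ 0 < p.2} where
  toFun c := ⟨(c.1 + c.2 + 2, c.1 + 1), by constructor <;> omega⟩
  invFun q := (q.1.2 - 1, q.1.1 - q.1.2 - 1)
  left_inv c := by
    obtain ⟨a, b⟩ := c
    exact Prod.ext (by simp) (by simp; omega)
  right_inv q := by
    obtain ⟨⟨a, b⟩, h1, h2⟩ := q
    apply Subtype.ext
    exact Prod.ext (by simp; omega) (by simp; omega)

lemma subtype_eq : (∑' p : {p : ℕ × ℕ // p.2 < p.1 ∧ 0 < p.2},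
    (1 : ℝ) / ((p.1.1 : ℝ) ^ 3 * (p.1.2 : ℝ) ^ 2)) = ∑' p, F 3 2 p := by
  rw [← Equiv.tsum_eq eSub
    (fun q : {p : ℕ × ℕ // p.2 < p.1 ∧ 0 < p.2} =>
      (1 : ℝ) / ((q.1.1 : ℝ) ^ 3 * (q.1.2 : ℝ) ^ 2))]
  apply tsum_congr
  intro c
  simp only [eSub, Equiv.coe_fn_mk, F]
  push_cast
  ring_nf

end
end Stmt16

theorem stmt_16 :
    ((∑' p : {p : ℕ × ℕ // p.2 < p.1 ∧ 0 < p.2},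
        (1 : ℝ) / ((p.1.1 : ℝ) ^ 3 * (p.1.2 : ℝ) ^ 2) : ℝ) : ℂ)
      = ((π : ℂ) ^ 2 * riemannZeta 3 - 11 * riemannZeta 5) / 2 := by
  have hval : (∑' p : {p : ℕ × ℕ // p.2 < p.1 ∧ 0 < p.2},
      (1 : ℝ) / ((p.1.1 : ℝ) ^ 3 * (p.1.2 : ℝ) ^ 2))
      = π ^ 2 / 2 * Stmt16.Z 3 - 11 / 2 * Stmt16.Z 5 := by
    rw [Stmt16.subtype_eq, Stmt16.A_eq, Stmt16.Z2_val]
    ring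
  rw [hval]
  have h3 : riemannZeta 3 = ((Stmt16.Z 3 : ℝ) : ℂ) := by
    have h := Stmt16.zeta_val 3 (by norm_num)
    rwa [show ((3:ℕ):ℂ) = (3:ℂ) by norm_num] at h
  have h5 : riemannZeta 5 = ((Stmt16.Z 5 : ℝ) : ℂ) := by
    have h := Stmt16.zeta_val 5 (by norm_num)
    rwa [show ((5:ℕ):ℂ) = (5:ℂ) by norm_num] at h
  rw [h3, h5]
  push_cast
  ring
end

section
/- 2·μ(2,1) = t(3), i.e. 2·∑_{n>m≥1, n even, m odd} 1/(n²m) = ∑_{n odd} 1/n³ = (7/8)ζ(3). -/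
open Real MeasureTheory Set

namespace Stmt18

noncomputable section

def a (i : ℕ) : ℝ := 2 * i + 1

lemma a_pos (i : ℕ) : 0 < a i := by
  have : (0:ℝ) ≤ i := Nat.cast_nonneg i
  unfold a; linarith

lemma add_one_le_a (i : ℕ) : (i : ℝ) + 1 ≤ a i := by
  have : (0:ℝ) ≤ i := Nat.cast_nonneg i
  unfold a; linarith

def F (q : ℕ × ℕ) : ℝ := 1 / ((a q.1 + a q.2) ^ 2 * a q.1)

def G (q : ℕ × ℕ) : ℝ := 1 / (a q.1 * a q.2 * (a q.1 + a q.2))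

lemma summable_shift : Summable (fun i : ℕ => 1 / ((i : ℝ) + 1) ^ (3/2 : ℝ)) := by
  have h : Summable (fun n : ℕ => 1 / (n : ℝ) ^ (3/2 : ℝ)) :=
    summable_one_div_nat_rpow.2 (by norm_num)
  have := (summable_nat_add_iff 1).2 h
  refine this.congr fun i => ?_
  push_cast
  ring_nf

lemma summable_one_div_a_cube : Summable (fun i : ℕ => 1 / a i ^ 3) := by
  have h : Summable (fun n : ℕ => 1 / (n : ℝ) ^ (3:ℕ)) :=
    summable_one_div_nat_pow.2 (by norm_num)
  have h2 := (summable_nat_add_iff 1).2 h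
  refine Summable.of_nonneg_of_le (fun i => by have := a_pos i; positivity) (fun i => ?_) h2
  have h3 : ((i:ℝ) + 1) ^ 3 ≤ a i ^ 3 := by
    have := add_one_le_a i
    have h0 : (0:ℝ) ≤ (i:ℝ) + 1 := by positivity
    exact pow_le_pow_left₀ h0 this 3
  rw [one_div, one_div]
  push_cast
  exact inv_anti₀ (by positivity) h3

lemma G_le (q : ℕ × ℕ) :
    G q ≤ (1 / ((q.1 : ℝ) + 1) ^ (3/2 : ℝ)) * (1 / ((q.2 : ℝ) + 1) ^ (3/2 : ℝ)) := by
  obtain ⟨i, j⟩ := q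
  have hai := a_pos i
  have haj := a_pos j
  have h1 : Real.sqrt (a i) * Real.sqrt (a j) ≤ a i + a j := by
    nlinarith [sq_nonneg (Real.sqrt (a i) - Real.sqrt (a j)),
      Real.sq_sqrt hai.le, Real.sq_sqrt haj.le, Real.sqrt_nonneg (a i),
      Real.sqrt_nonneg (a j)]
  have key : ((i:ℝ)+1) ^ (3/2:ℝ) * ((j:ℝ)+1) ^ (3/2:ℝ) ≤ a i * a j * (a i + a j) := by
    have e1 : ((i:ℝ)+1) ^ (3/2:ℝ) ≤ a i ^ (3/2:ℝ) :=
      Real.rpow_le_rpow (by positivity) (add_one_le_a i) (by norm_num)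
    have e2 : ((j:ℝ)+1) ^ (3/2:ℝ) ≤ a j ^ (3/2:ℝ) :=
      Real.rpow_le_rpow (by positivity) (add_one_le_a j) (by norm_num)
    have e3 : (a i) ^ (3/2:ℝ) * (a j) ^ (3/2:ℝ) ≤ a i * a j * (a i + a j) := by
      have fi : (a i) ^ (3/2:ℝ) = a i * Real.sqrt (a i) := by
        rw [show (3/2:ℝ) = 1 + 1/2 by norm_num, Real.rpow_add hai, Real.rpow_one,
          ← Real.sqrt_eq_rpow]
      have fj : (a j) ^ (3/2:ℝ) = a j * Real.sqrt (a j) := by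
        rw [show (3/2:ℝ) = 1 + 1/2 by norm_num, Real.rpow_add haj, Real.rpow_one,
          ← Real.sqrt_eq_rpow]
      rw [fi, fj]
      calc a i * Real.sqrt (a i) * (a j * Real.sqrt (a j))
          = a i * a j * (Real.sqrt (a i) * Real.sqrt (a j)) := by ring
        _ ≤ a i * a j * (a i + a j) := by
            apply mul_le_mul_of_nonneg_left h1 (by positivity)
    calc ((i:ℝ)+1) ^ (3/2:ℝ) * ((j:ℝ)+1) ^ (3/2:ℝ)
        ≤ (a i) ^ (3/2:ℝ) * (a j) ^ (3/2:ℝ) := by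
          apply mul_le_mul e1 e2 (by positivity) (by positivity)
      _ ≤ a i * a j * (a i + a j) := e3
  unfold G
  dsimp only
  rw [div_mul_div_comm, one_mul]
  exact one_div_le_one_div_of_le (mul_pos (Real.rpow_pos_of_pos (by positivity) _)
    (Real.rpow_pos_of_pos (by positivity) _)) key

lemma G_nonneg (q : ℕ × ℕ) : 0 ≤ G q := by
  have h1 := a_pos q.1
  have h2 := a_pos q.2
  exact le_of_lt (one_div_pos.2 (mul_pos (mul_pos h1 h2) (by linarith)))

lemma F_nonneg (q : ℕ × ℕ) : 0 ≤ F q := by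
  have h1 := a_pos q.1
  have h2 := a_pos q.2
  exact le_of_lt (one_div_pos.2 (mul_pos (pow_pos (by linarith) 2) h1))

lemma summable_G : Summable G := by
  have hs := summable_shift
  have := hs.mul_of_nonneg hs (fun i => by positivity) (fun j => by positivity)
  exact Summable.of_nonneg_of_le G_nonneg G_le this

lemma F_le_G (q : ℕ × ℕ) : F q ≤ G q := by
  obtain ⟨i, j⟩ := q
  have hai := a_pos i
  have haj := a_pos j
  unfold F G
  dsimp only
  apply one_div_le_one_div_of_le (mul_pos (mul_pos hai haj) (by linarith))
  nlinarith [mul_pos (mul_pos hai hai) (add_pos hai haj)]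

lemma summable_F : Summable F :=
  Summable.of_nonneg_of_le F_nonneg F_le_G summable_G

lemma F_add_swap (q : ℕ × ℕ) : F q + F q.swap = G q := by
  obtain ⟨i, j⟩ := q
  have hai := a_pos i
  have haj := a_pos j
  have hs : 0 < a i + a j := by linarith
  have hs' : 0 < a j + a i := by linarith
  unfold F G
  simp only [Prod.swap_prod_mk]
  rw [div_add_div _ _ (ne_of_gt (mul_pos (pow_pos hs 2) hai))
    (ne_of_gt (mul_pos (pow_pos hs' 2) haj)),
    div_eq_div_iff (mul_ne_zero (ne_of_gt (mul_pos (pow_pos hs 2) hai))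
      (ne_of_gt (mul_pos (pow_pos hs' 2) haj)))
      (ne_of_gt (mul_pos (mul_pos hai haj) hs))]
  ring

def e : ℕ × ℕ ≃ {p : ℕ × ℕ // p.2 < p.1 ∧ 0 < p.2 ∧ Even p.1 ∧ Odd p.2} where
  toFun q := ⟨(2 * q.1 + 2 * q.2 + 2, 2 * q.1 + 1),
    ⟨by omega, by omega, ⟨q.1 + q.2 + 1, by ring⟩, ⟨q.1, by ring⟩⟩⟩
  invFun p := ((p.1.2 - 1) / 2, (p.1.1 - p.1.2 - 1) / 2)
  left_inv q := by
    obtain ⟨i, j⟩ := q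
    simp only []
    exact Prod.ext (by omega) (by omega)
  right_inv p := by
    obtain ⟨⟨n, m⟩, hlt, hm, he, ho⟩ := p
    obtain ⟨r, hr⟩ := he
    obtain ⟨s, hs⟩ := ho
    apply Subtype.ext
    simp only [] at *
    exact Prod.ext (by omega) (by omega)

lemma step1 :
    (∑' p : {p : ℕ × ℕ // p.2 < p.1 ∧ 0 < p.2 ∧ Even p.1 ∧ Odd p.2},
        (1 : ℝ) / ((p.1.1 : ℝ) ^ 2 * (p.1.2 : ℝ))) = ∑' q, F q := by
  rw [← Equiv.tsum_eq e (fun p => (1 : ℝ) / ((p.1.1 : ℝ) ^ 2 * (p.1.2 : ℝ)))]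
  refine tsum_congr fun q => ?_
  obtain ⟨i, j⟩ := q
  show (1:ℝ) / (((2 * i + 2 * j + 2 : ℕ) : ℝ) ^ 2 * ((2 * i + 1 : ℕ) : ℝ)) = F (i, j)
  unfold F a
  push_cast
  ring_nf

lemma step2 : 2 * (∑' q, F q) = ∑' q, G q := by
  have hswap : Summable (fun q : ℕ × ℕ => F q.swap) :=
    ((Equiv.prodComm ℕ ℕ).summable_iff).2 summable_F
  have h1 : (∑' q : ℕ × ℕ, F q.swap) = ∑' q, F q := by
    exact Equiv.tsum_eq (Equiv.prodComm ℕ ℕ) F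
  rw [two_mul]
  nth_rewrite 2 [← h1]
  rw [← Summable.tsum_add summable_F hswap]
  exact tsum_congr fun q => F_add_swap q


def L (x : ℝ) : ℝ := (Real.log (1 + x) - Real.log (1 - x)) / 2

lemma hasSum_L {x : ℝ} (hx : x ∈ Ioo (0:ℝ) 1) :
    HasSum (fun i : ℕ => x ^ (2 * i + 1) / a i) (L x) := by
  obtain ⟨h0, h1⟩ := hx
  have habs : |x| < 1 := by rw [abs_of_pos h0]; exact h1
  have H2 := (Real.hasSum_log_sub_log_of_abs_lt_one habs).div_const 2
  have he : (fun k : ℕ => (2:ℝ) * (1 / (2 * (k:ℝ) + 1)) * x ^ (2 * k + 1) / 2)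
      = fun i : ℕ => x ^ (2 * i + 1) / a i := by
    funext k; unfold a; ring
  rw [he] at H2
  exact H2

lemma summable_norm_c {x : ℝ} (hx : x ∈ Ioo (0:ℝ) 1) :
    Summable (fun i : ℕ => ‖x ^ (2 * i + 1) / a i‖) := by
  obtain ⟨h0, h1⟩ := hx
  refine Summable.of_nonneg_of_le (fun i => norm_nonneg _) (fun i => ?_)
    (summable_geometric_of_lt_one (sq_nonneg x) (by nlinarith : x ^ 2 < 1))
  have hai := a_pos i
  have h2 : ‖x ^ (2 * i + 1) / a i‖ = x ^ (2 * i + 1) / a i := by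
    rw [Real.norm_eq_abs, abs_of_nonneg]
    positivity
  rw [h2]
  calc x ^ (2 * i + 1) / a i ≤ x ^ (2 * i + 1) / 1 := by
        apply div_le_div_of_nonneg_left ?_ ?_ ?_ <;>
          [positivity; norm_num; (unfold a; have : (0:ℝ) ≤ i := Nat.cast_nonneg i; linarith)]
    _ = (x ^ 2) ^ i * x := by rw [div_one, pow_succ, pow_mul]
    _ ≤ (x ^ 2) ^ i * 1 := by
        apply mul_le_mul_of_nonneg_left h1.le (by positivity)
    _ = (x ^ 2) ^ i := mul_one _

def T (q : ℕ × ℕ) (x : ℝ) : ℝ := x ^ (2 * q.1 + 2 * q.2 + 1) * (1 / (a q.1 * a q.2))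

lemma T_integral (q : ℕ × ℕ) : (∫ x in Ioo (0:ℝ) 1, T q x) = G q := by
  obtain ⟨i, j⟩ := q
  have h2 : (∫ x in Ioo (0:ℝ) 1, x ^ (2 * i + 2 * j + 1)) =
      1 / ((2 * i + 2 * j + 1 : ℕ) + 1 : ℝ) := by
    rw [← integral_Ioc_eq_integral_Ioo, ← intervalIntegral.integral_of_le zero_le_one,
      integral_pow]
    norm_num
  unfold T
  dsimp only
  rw [integral_mul_const, h2]
  unfold G a
  dsimp only
  have d1 : (0:ℝ) < 2 * (i:ℝ) + 1 := by have : (0:ℝ) ≤ i := Nat.cast_nonneg i; linarith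
  have d2 : (0:ℝ) < 2 * (j:ℝ) + 1 := by have : (0:ℝ) ≤ j := Nat.cast_nonneg j; linarith
  rw [div_mul_div_comm, one_mul]
  congr 1
  push_cast
  ring

lemma T_cont (q : ℕ × ℕ) : Continuous (T q) := by
  exact (continuous_pow _).mul continuous_const

lemma T_integrableOn (q : ℕ × ℕ) : IntegrableOn (T q) (Ioo (0:ℝ) 1) :=
  ((T_cont q).integrableOn_Icc (a := 0) (b := 1)).mono_set Ioo_subset_Icc_self

lemma tsum_T {x : ℝ} (hx : x ∈ Ioo (0:ℝ) 1) :
    (∑' q : ℕ × ℕ, T q x) = (L x) ^ 2 / x := by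
  obtain ⟨h0, h1⟩ := hx
  have hL := hasSum_L ⟨h0, h1⟩
  have hnorm := summable_norm_c ⟨h0, h1⟩
  have hmul := tsum_mul_tsum_of_summable_norm hnorm hnorm
  have hteq : ∀ q : ℕ × ℕ,
      T q x = (x ^ (2 * q.1 + 1) / a q.1) * (x ^ (2 * q.2 + 1) / a q.2) / x := by
    intro ⟨i, j⟩
    have d1 := (a_pos i).ne'
    have d2 := (a_pos j).ne'
    unfold T
    dsimp only
    field_simp
    ring
  calc (∑' q : ℕ × ℕ, T q x)
      = ∑' q : ℕ × ℕ, (x ^ (2 * q.1 + 1) / a q.1) * (x ^ (2 * q.2 + 1) / a q.2) / x :=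
        tsum_congr hteq
    _ = (∑' q : ℕ × ℕ, (x ^ (2 * q.1 + 1) / a q.1) * (x ^ (2 * q.2 + 1) / a q.2)) / x :=
        tsum_div_const
    _ = (L x * L x) / x := by rw [← hmul, hL.tsum_eq]
    _ = (L x) ^ 2 / x := by rw [sq]

lemma step3 : (∑' q, G q) = ∫ x in Ioo (0:ℝ) 1, (L x) ^ 2 / x := by
  have hmeas : ∀ q : ℕ × ℕ, AEStronglyMeasurable (T q) (volume.restrict (Ioo 0 1)) :=
    fun q => (T_cont q).aestronglyMeasurable
  have hT_nonneg : ∀ q : ℕ × ℕ, ∀ x ∈ Ioo (0:ℝ) 1, 0 ≤ T q x := by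
    intro q x hx
    have h1 := hx.1
    unfold T
    have := a_pos q.1
    have := a_pos q.2
    positivity
  have heq : ∀ q : ℕ × ℕ,
      (∫⁻ x, ‖T q x‖₊ ∂(volume.restrict (Ioo 0 1))) = ENNReal.ofReal (G q) := by
    intro q
    have hae : 0 ≤ᵐ[volume.restrict (Ioo (0:ℝ) 1)] T q :=
      (ae_restrict_iff' measurableSet_Ioo).2 (Filter.Eventually.of_forall (hT_nonneg q))
    calc (∫⁻ x, ‖T q x‖₊ ∂(volume.restrict (Ioo 0 1)))
        = ∫⁻ x, ENNReal.ofReal (T q x) ∂(volume.restrict (Ioo 0 1)) := by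
          refine lintegral_congr_ae (hae.mono fun x hx => ?_)
          exact Real.enorm_eq_ofReal hx
      _ = ENNReal.ofReal (∫ x in Ioo (0:ℝ) 1, T q x) :=
          (ofReal_integral_eq_lintegral_ofReal (T_integrableOn q) hae).symm
      _ = ENNReal.ofReal (G q) := by rw [T_integral]
  have hfin : (∑' q : ℕ × ℕ, ∫⁻ x, ‖T q x‖₊ ∂(volume.restrict (Ioo 0 1))) ≠ ⊤ := by
    rw [tsum_congr heq, ← ENNReal.ofReal_tsum_of_nonneg G_nonneg summable_G]
    exact ENNReal.ofReal_ne_top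
  calc (∑' q, G q) = ∑' q : ℕ × ℕ, ∫ x in Ioo (0:ℝ) 1, T q x :=
        tsum_congr fun q => (T_integral q).symm
    _ = ∫ x in Ioo (0:ℝ) 1, ∑' q : ℕ × ℕ, T q x := (integral_tsum hmeas hfin).symm
    _ = ∫ x in Ioo (0:ℝ) 1, (L x) ^ 2 / x :=
        setIntegral_congr_fun measurableSet_Ioo fun x hx => tsum_T hx


def phi (u : ℝ) : ℝ := (1 - u) / (1 + u)

lemma phi_maps {u : ℝ} (hu : u ∈ Ioo (0:ℝ) 1) : phi u ∈ Ioo (0:ℝ) 1 := by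
  obtain ⟨h0, h1⟩ := hu
  unfold phi
  constructor
  · exact div_pos (by linarith) (by linarith)
  · rw [div_lt_one (by linarith)]; linarith

lemma phi_invol {u : ℝ} (hu : u ∈ Ioo (0:ℝ) 1) : phi (phi u) = u := by
  obtain ⟨h0, h1⟩ := hu
  unfold phi
  have h2 : (1:ℝ) + u ≠ 0 := by linarith
  have h3 : 1 + (1 - u) / (1 + u) = 2 / (1 + u) := by field_simp; ring
  rw [h3]
  have h4 : (2:ℝ) / (1 + u) ≠ 0 := by positivity
  field_simp
  ring

lemma phi_image : phi '' Ioo 0 1 = Ioo (0:ℝ) 1 := by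
  apply Subset.antisymm
  · rintro y ⟨u, hu, rfl⟩
    exact phi_maps hu
  · intro y hy
    exact ⟨phi y, phi_maps hy, phi_invol hy⟩

lemma phi_inj : InjOn phi (Ioo 0 1) := by
  intro u hu v hv h
  have := congrArg phi h
  rwa [phi_invol hu, phi_invol hv] at this

lemma phi_deriv {u : ℝ} (hu : u ∈ Ioo (0:ℝ) 1) :
    HasDerivWithinAt phi (-2 / (1 + u) ^ 2) (Ioo 0 1) u := by
  have h2 : (1:ℝ) + u ≠ 0 := by have := hu.1; linarith
  have := (hasDerivAt_id u).const_sub 1 |>.div ((hasDerivAt_id u).const_add 1) h2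
  exact this.hasDerivWithinAt.congr_deriv (by simp only [id]; ring)

lemma L_phi {u : ℝ} (hu : u ∈ Ioo (0:ℝ) 1) : L (phi u) = -Real.log u / 2 := by
  obtain ⟨h0, h1⟩ := hu
  have h2 : (1:ℝ) + u ≠ 0 := by linarith
  have e1 : 1 + phi u = 2 / (1 + u) := by unfold phi; field_simp; ring
  have e2 : 1 - phi u = 2 * u / (1 + u) := by unfold phi; field_simp; ring
  unfold L
  rw [e1, e2, Real.log_div (by norm_num) h2,
    Real.log_div (by positivity) h2, Real.log_mul (by norm_num) h0.ne']
  ring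

lemma step4 : (∫ x in Ioo (0:ℝ) 1, (L x) ^ 2 / x) =
    ∫ u in Ioo (0:ℝ) 1, (Real.log u) ^ 2 / (2 * (1 - u ^ 2)) := by
  have key := integral_image_eq_integral_abs_deriv_smul measurableSet_Ioo
    (fun u hu => phi_deriv hu) phi_inj (fun x => (L x) ^ 2 / x)
  rw [phi_image] at key
  rw [key]
  refine setIntegral_congr_fun measurableSet_Ioo fun u hu => ?_
  obtain ⟨h0, h1⟩ := hu
  have h2 : (1:ℝ) + u ≠ 0 := by linarith
  rw [L_phi ⟨h0, h1⟩]
  have habs : |(-2 : ℝ) / (1 + u) ^ 2| = 2 / (1 + u) ^ 2 := by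
    rw [abs_div, abs_neg, abs_two, abs_of_pos (by positivity)]
  rw [smul_eq_mul, habs]
  unfold phi
  have h3 : (1:ℝ) - u ≠ 0 := by linarith
  have h4 : (1:ℝ) - u ^ 2 ≠ 0 := by nlinarith
  field_simp
  ring

def psi (t : ℝ) : ℝ := Real.exp (-t)

lemma psi_image : psi '' Ioi 0 = Ioo (0:ℝ) 1 := by
  apply Subset.antisymm
  · rintro y ⟨t, ht, rfl⟩
    have ht' : (0:ℝ) < t := ht
    refine ⟨Real.exp_pos _, ?_⟩
    calc Real.exp (-t) < Real.exp 0 := Real.exp_lt_exp.2 (by linarith)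
      _ = 1 := Real.exp_zero
  · intro y hy
    refine ⟨-Real.log y, ?_, ?_⟩
    · simpa using Real.log_neg hy.1 hy.2
    · unfold psi; rw [neg_neg, Real.exp_log hy.1]

lemma psi_inj : InjOn psi (Ioi 0) := by
  intro t _ s _ h
  have := Real.exp_eq_exp.1 h
  linarith

lemma psi_deriv {t : ℝ} :
    HasDerivWithinAt psi (-Real.exp (-t)) (Ioi 0) t := by
  have h1 : HasDerivAt (fun t : ℝ => -t) (-1) t := (hasDerivAt_id t).neg
  have h2 := (Real.hasDerivAt_exp (-t)).comp t h1
  have h3 : Real.exp (-t) * (-1) = -Real.exp (-t) := by ring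
  rw [h3] at h2
  exact h2.hasDerivWithinAt

lemma psi_smul_eq (m : ℕ) {t : ℝ} (ht : t ∈ Ioi (0:ℝ)) :
    |(-Real.exp (-t))| • ((psi t) ^ m * (Real.log (psi t)) ^ 2)
      = t ^ ((3:ℝ) - 1) * Real.exp (-(((m:ℝ) + 1) * t)) := by
  have ht' : (0:ℝ) < t := ht
  unfold psi
  rw [smul_eq_mul, abs_neg, abs_of_pos (Real.exp_pos _), Real.log_exp,
    ← Real.exp_nat_mul]
  have h1 : t ^ ((3:ℝ) - 1) = t ^ (2:ℕ) := by
    rw [show ((3:ℝ) - 1) = ((2:ℕ):ℝ) by norm_num, Real.rpow_natCast]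
  rw [h1]
  have h2 : Real.exp (-t) * (Real.exp ((m:ℝ) * -t) * (-t) ^ 2)
      = Real.exp (-t + (m:ℝ) * -t) * t ^ 2 := by
    rw [Real.exp_add]; ring
  rw [h2, show -t + (m:ℝ) * -t = -(((m:ℝ) + 1) * t) by ring]
  ring

lemma integrable_pow_mul_log_sq (m : ℕ) :
    IntegrableOn (fun u : ℝ => u ^ m * (Real.log u) ^ 2) (Ioo (0:ℝ) 1) := by
  have key := integrableOn_image_iff_integrableOn_abs_deriv_smul measurableSet_Ioi
    (fun t _ => psi_deriv (t := t)) psi_inj (fun u => u ^ m * (Real.log u) ^ 2)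
  rw [psi_image] at key
  rw [key]
  have hcont : Continuous (fun t : ℝ => t ^ ((3:ℝ) - 1) * Real.exp (-(((m:ℝ) + 1) * t))) := by
    apply Continuous.mul
    · exact continuous_iff_continuousAt.2 fun x =>
        Real.continuousAt_rpow_const x _ (Or.inr (by norm_num))
    · exact Real.continuous_exp.comp ((continuous_const.mul continuous_id).neg)
  apply (IntegrableOn.congr_fun ?_ (fun t ht => (psi_smul_eq m ht).symm) measurableSet_Ioi)
  -- IntegrableOn (fun t => t ^ ((3:ℝ)-1) * exp (-(((m:ℝ)+1)*t))) (Ioi 0)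
  refine Integrable.mono (Real.GammaIntegral_convergent (by norm_num : (0:ℝ) < 3))
    hcont.aestronglyMeasurable ?_
  refine (ae_restrict_iff' measurableSet_Ioi).2 (Filter.Eventually.of_forall fun t ht => ?_)
  have ht' : (0:ℝ) < t := ht
  have h1 : (0:ℝ) ≤ t ^ ((3:ℝ) - 1) := Real.rpow_nonneg ht'.le _
  have h2 : Real.exp (-(((m:ℝ) + 1) * t)) ≤ Real.exp (-t) := by
    apply Real.exp_le_exp.2
    have : (0:ℝ) ≤ (m:ℝ) := Nat.cast_nonneg m
    nlinarith
  rw [Real.norm_eq_abs, Real.norm_eq_abs, abs_of_nonneg (by positivity),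
    abs_of_nonneg (by positivity)]
  calc t ^ ((3:ℝ) - 1) * Real.exp (-(((m:ℝ) + 1) * t))
      ≤ t ^ ((3:ℝ) - 1) * Real.exp (-t) := by
        exact mul_le_mul_of_nonneg_left h2 h1
    _ = Real.exp (-t) * t ^ ((3:ℝ) - 1) := by ring

lemma integral_pow_mul_log_sq (m : ℕ) :
    (∫ u in Ioo (0:ℝ) 1, u ^ m * (Real.log u) ^ 2) = 2 / ((m : ℝ) + 1) ^ 3 := by
  have key := integral_image_eq_integral_abs_deriv_smul measurableSet_Ioi
    (fun t _ => psi_deriv (t := t)) psi_inj (fun u => u ^ m * (Real.log u) ^ 2)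
  rw [psi_image] at key
  rw [key, setIntegral_congr_fun measurableSet_Ioi (fun t ht => psi_smul_eq m ht),
    integral_rpow_mul_exp_neg_mul_Ioi (by norm_num : (0:ℝ) < 3)
      (by positivity : (0:ℝ) < (m:ℝ) + 1)]
  have g3 : Real.Gamma 3 = 2 := by
    rw [show (3:ℝ) = ((2:ℕ):ℝ) + 1 by norm_num, Real.Gamma_nat_eq_factorial]
    norm_num
  have rp : ((1:ℝ) / ((m:ℝ) + 1)) ^ (3:ℝ) = ((1:ℝ) / ((m:ℝ) + 1)) ^ (3:ℕ) := by
    rw [show (3:ℝ) = ((3:ℕ):ℝ) by norm_num, Real.rpow_natCast]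
  rw [g3, rp, div_pow, one_pow]
  ring

def S (k : ℕ) (u : ℝ) : ℝ := u ^ (2 * k) * (Real.log u) ^ 2 / 2

lemma S_integrableOn (k : ℕ) : IntegrableOn (S k) (Ioo (0:ℝ) 1) :=
  (integrable_pow_mul_log_sq (2 * k)).div_const 2

lemma S_integral (k : ℕ) : (∫ u in Ioo (0:ℝ) 1, S k u) = 1 / a k ^ 3 := by
  unfold S
  rw [integral_div, integral_pow_mul_log_sq]
  unfold a
  push_cast
  rw [div_div, div_eq_div_iff (by positivity) (by positivity)]
  ring

lemma tsum_S {u : ℝ} (hu : u ∈ Ioo (0:ℝ) 1) :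
    (∑' k : ℕ, S k u) = (Real.log u) ^ 2 / (2 * (1 - u ^ 2)) := by
  obtain ⟨h0, h1⟩ := hu
  have hg : HasSum (fun k : ℕ => (u ^ 2) ^ k) (1 - u ^ 2)⁻¹ :=
    hasSum_geometric_of_lt_one (by positivity) (by nlinarith)
  have h2 := hg.mul_left ((Real.log u) ^ 2 / 2)
  have he : (fun k : ℕ => (Real.log u) ^ 2 / 2 * (u ^ 2) ^ k) = fun k : ℕ => S k u := by
    funext k; unfold S; rw [pow_mul]; ring
  rw [he] at h2
  rw [h2.tsum_eq]
  have h3 : (1:ℝ) - u ^ 2 ≠ 0 := by nlinarith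
  field_simp

lemma step5 : (∫ u in Ioo (0:ℝ) 1, (Real.log u) ^ 2 / (2 * (1 - u ^ 2))) =
    ∑' k : ℕ, 1 / a k ^ 3 := by
  have hmeas : ∀ k : ℕ, AEStronglyMeasurable (S k) (volume.restrict (Ioo 0 1)) := fun k =>
    (((measurable_id.pow_const (2 * k)).mul (Real.measurable_log.pow_const 2)).div_const
      2).aestronglyMeasurable
  have hS_nonneg : ∀ k : ℕ, ∀ u ∈ Ioo (0:ℝ) 1, 0 ≤ S k u := by
    intro k u hu
    have h1 := hu.1
    unfold S
    positivity
  have heq : ∀ k : ℕ,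
      (∫⁻ u, ‖S k u‖₊ ∂(volume.restrict (Ioo 0 1))) = ENNReal.ofReal (1 / a k ^ 3) := by
    intro k
    have hae : 0 ≤ᵐ[volume.restrict (Ioo (0:ℝ) 1)] S k :=
      (ae_restrict_iff' measurableSet_Ioo).2 (Filter.Eventually.of_forall (hS_nonneg k))
    calc (∫⁻ u, ‖S k u‖₊ ∂(volume.restrict (Ioo 0 1)))
        = ∫⁻ u, ENNReal.ofReal (S k u) ∂(volume.restrict (Ioo 0 1)) :=
          lintegral_congr_ae (hae.mono fun u hu => Real.enorm_eq_ofReal hu)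
      _ = ENNReal.ofReal (∫ u in Ioo (0:ℝ) 1, S k u) :=
          (ofReal_integral_eq_lintegral_ofReal (S_integrableOn k) hae).symm
      _ = ENNReal.ofReal (1 / a k ^ 3) := by rw [S_integral]
  have hfin : (∑' k : ℕ, ∫⁻ u, ‖S k u‖₊ ∂(volume.restrict (Ioo 0 1))) ≠ ⊤ := by
    rw [tsum_congr heq, ← ENNReal.ofReal_tsum_of_nonneg
      (fun k => by have := a_pos k; positivity) summable_one_div_a_cube]
    exact ENNReal.ofReal_ne_top
  calc (∫ u in Ioo (0:ℝ) 1, (Real.log u) ^ 2 / (2 * (1 - u ^ 2)))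
      = ∫ u in Ioo (0:ℝ) 1, ∑' k : ℕ, S k u :=
        (setIntegral_congr_fun measurableSet_Ioo fun u hu => (tsum_S hu).symm)
    _ = ∑' k : ℕ, ∫ u in Ioo (0:ℝ) 1, S k u := integral_tsum hmeas hfin
    _ = ∑' k : ℕ, 1 / a k ^ 3 := tsum_congr S_integral


def eodd : ℕ ≃ {m : ℕ // Odd m} where
  toFun k := ⟨2 * k + 1, odd_two_mul_add_one k⟩
  invFun m := (m.1 - 1) / 2
  left_inv k := by show (2 * k + 1 - 1) / 2 = k; omega
  right_inv m := by
    obtain ⟨m, s, hs⟩ := m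
    apply Subtype.ext
    simp only []
    omega

lemma step6 : (∑' m : {m : ℕ // Odd m}, (1 : ℝ) / (m : ℝ) ^ 3) = ∑' k : ℕ, 1 / a k ^ 3 := by
  rw [← Equiv.tsum_eq eodd (fun m => (1 : ℝ) / (m : ℝ) ^ 3)]
  refine tsum_congr fun k => ?_
  show (1:ℝ) / ((2 * k + 1 : ℕ) : ℝ) ^ 3 = 1 / a k ^ 3
  unfold a
  push_cast
  ring_nf

lemma summable_cube_shift : Summable (fun n : ℕ => 1 / ((n:ℝ) + 1) ^ 3) := by
  have h : Summable (fun n : ℕ => 1 / (n : ℝ) ^ (3:ℕ)) :=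
    summable_one_div_nat_pow.2 (by norm_num)
  have h2 := (summable_nat_add_iff 1).2 h
  refine h2.congr fun n => ?_
  push_cast
  ring_nf

lemma t3_eq : (∑' k : ℕ, 1 / a k ^ 3) = 7 / 8 * ∑' n : ℕ, 1 / ((n:ℝ) + 1) ^ 3 := by
  set f : ℕ → ℝ := fun n => 1 / ((n:ℝ) + 1) ^ 3 with hf
  have hterm_e : ∀ k : ℕ, f (2 * k) = 1 / a k ^ 3 := by
    intro k
    simp only [hf]
    unfold a
    push_cast
    ring_nf
  have hterm_o : ∀ k : ℕ, f (2 * k + 1) = 1 / 8 * (1 / ((k:ℝ) + 1) ^ 3) := by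
    intro k
    simp only [hf]
    have hk : ((k:ℝ) + 1) ^ 3 ≠ 0 := by positivity
    push_cast
    have h2 : ((2:ℝ) * k + 1 + 1) ^ 3 ≠ 0 := by positivity
    field_simp
    ring
  have he : Summable (fun k : ℕ => f (2 * k)) := by
    refine summable_one_div_a_cube.congr fun k => (hterm_e k).symm
  have ho : Summable (fun k : ℕ => f (2 * k + 1)) := by
    refine (summable_cube_shift.mul_left (1/8)).congr fun k => (hterm_o k).symm
  have key := tsum_even_add_odd he ho
  have h1 : (∑' k : ℕ, f (2 * k)) = ∑' k : ℕ, 1 / a k ^ 3 := tsum_congr hterm_e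
  have h2 : (∑' k : ℕ, f (2 * k + 1)) = 1 / 8 * ∑' n : ℕ, 1 / ((n:ℝ) + 1) ^ 3 := by
    rw [tsum_congr hterm_o, tsum_mul_left]
  rw [h1, h2] at key
  linarith [key]

lemma zeta3 : ((∑' n : ℕ, 1 / ((n:ℝ) + 1) ^ 3 : ℝ) : ℂ) = riemannZeta 3 := by
  rw [show (3:ℂ) = ((3:ℕ):ℂ) by norm_num, zeta_nat_eq_tsum_of_gt_one (by norm_num)]
  have hsC : Summable (fun n : ℕ => 1 / (n:ℂ) ^ 3) := by
    refine Summable.of_norm ?_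
    have h : Summable (fun n : ℕ => 1 / (n : ℝ) ^ (3:ℕ)) :=
      summable_one_div_nat_pow.2 (by norm_num)
    refine h.congr fun n => ?_
    rw [norm_div, norm_one, norm_pow, Complex.norm_natCast]
  rw [Summable.tsum_eq_zero_add hsC]
  have h0 : (1:ℂ) / ((0:ℕ):ℂ) ^ 3 = 0 := by norm_num
  rw [h0, zero_add, Complex.ofReal_tsum]
  refine tsum_congr fun n => ?_
  push_cast
  norm_num

end

end Stmt18

theorem stmt_18 :
    2 * ∑' p : {p : ℕ × ℕ // p.2 < p.1 ∧ 0 < p.2 ∧ Even p.1 ∧ Odd p.2},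
        (1 : ℝ) / ((p.1.1 : ℝ) ^ 2 * (p.1.2 : ℝ))
      = ∑' m : {m : ℕ // Odd m}, (1 : ℝ) / (m : ℝ) ^ 3 ∧
    ((∑' m : {m : ℕ // Odd m}, (1 : ℝ) / (m : ℝ) ^ 3 : ℝ) : ℂ)
      = 7 / 8 * riemannZeta 3 := by
  constructor
  · rw [Stmt18.step1, Stmt18.step2, Stmt18.step3, Stmt18.step4, Stmt18.step5, Stmt18.step6]
  · rw [Stmt18.step6, Stmt18.t3_eq, Complex.ofReal_mul, Stmt18.zeta3]
    norm_num
end
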